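/- arXiv:2411.03677 — 2 statements merged into one kernel-verified Lean document; each statement's English description precedes it below -/
import Mathlib

section
/- For fixed d, V, C > 0, the finite-blocklength error probability ε(n) = Q(w(n)) is convex in n on any interval of n > 0 where w(n) ≥ 0, since ε''(n) = Q''(w)·(w')² + Q'(w)·w'' with Q''(w) ≥ 0 for w ≥ 0, w'' ≤ 0, and Q'(w) < 0. -/
/-! Q is antitone, and convex on [0, ∞) since Q' = -φ with the Gaussian density φ decreasing
there. Since w(n) = (ln 2 / √V)(C √n - d / √n), w is concave on (0, ∞). An antitone convex
function of a concave one is convex as long as the inner function takes values where the outer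
one is convex, here w ≥ 0. -/

noncomputable def Qfun (x : ℝ) : ℝ :=
  (1 / Real.sqrt (2 * Real.pi)) * ∫ t in Set.Ioi x, Real.exp (-t ^ 2 / 2)

noncomputable def wfun (d V C n : ℝ) : ℝ := Real.sqrt (n / V) * (C - d / n) * Real.log 2

open MeasureTheory Set Real

theorem ConvexOn.comp_concaveOn_of_mapsTo {𝕜 E β : Type*} [Semiring 𝕜] [PartialOrder 𝕜]
    [AddCommMonoid E] [SMul 𝕜 E] [AddCommMonoid β] [PartialOrder β] [SMul 𝕜 β]
    {s : Set E} {t : Set 𝕜} {g : 𝕜 → β} {f : E → 𝕜}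
    (hg : ConvexOn 𝕜 t g) (hf : ConcaveOn 𝕜 s f) (hst : MapsTo f s t) (hg' : AntitoneOn g t) :
    ConvexOn 𝕜 s (g ∘ f) := by
  refine ⟨hf.1, fun x hx y hy a b ha hb hab => ?_⟩
  have hmix : a • f x + b • f y ∈ t := hg.1 (hst hx) (hst hy) ha hb hab
  calc g (f (a • x + b • y)) ≤ g (a • f x + b • f y) :=
        hg' hmix (hst (hf.1 hx hy ha hb hab)) (hf.2 hx hy ha hb hab)
    _ ≤ a • g (f x) + b • g (f y) := hg.2 (hst hx) (hst hy) ha hb hab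

theorem setIntegral_Ioi_eq_sub_intervalIntegral {E : Type*} [NormedAddCommGroup E]
    [NormedSpace ℝ E] {f : ℝ → E} (hf : Integrable f) (x y : ℝ) :
    ∫ t in Ioi y, f t = (∫ t in Ioi x, f t) - ∫ t in x..y, f t := by
  have hx := intervalIntegral.integral_Iic_add_Ioi (b := x) hf.integrableOn hf.integrableOn
  have hy := intervalIntegral.integral_Iic_add_Ioi (b := y) hf.integrableOn hf.integrableOn
  rw [← intervalIntegral.integral_Iic_sub_Iic hf.integrableOn hf.integrableOn]
  linear_combination (norm := module) hy - hx

theorem hasDerivAt_setIntegral_Ioi {E : Type*} [NormedAddCommGroup E] [NormedSpace ℝ E]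
    [CompleteSpace E] {f : ℝ → E} {x : ℝ} (hf : Integrable f) (hx : ContinuousAt f x) :
    HasDerivAt (fun y => ∫ t in Ioi y, f t) (-f x) x := by
  have hright : HasDerivAt (fun y => ∫ t in x..y, f t) (f x) x :=
    intervalIntegral.integral_hasDerivAt_right hf.intervalIntegrable
      hf.aestronglyMeasurable.stronglyMeasurableAtFilter hx
  exact (hright.const_sub _).congr_of_eventuallyEq
    (.of_forall (setIntegral_Ioi_eq_sub_intervalIntegral hf x))

theorem integrable_exp_neg_sq_div_two : Integrable fun t : ℝ => exp (-t ^ 2 / 2) := by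
  simpa [div_eq_inv_mul, neg_div, mul_comm] using
    integrable_exp_neg_mul_sq (by norm_num : (0 : ℝ) < 1 / 2)

theorem hasDerivAt_Qfun (x : ℝ) :
    HasDerivAt Qfun (-(1 / √(2 * π) * exp (-x ^ 2 / 2))) x := by
  rw [← mul_neg]
  exact (hasDerivAt_setIntegral_Ioi integrable_exp_neg_sq_div_two
    (by fun_prop)).const_mul _

theorem antitone_Qfun : Antitone Qfun := fun x y hxy =>
  mul_le_mul_of_nonneg_left
    (setIntegral_mono_set integrable_exp_neg_sq_div_two.integrableOn
      (.of_forall fun t => (exp_pos _).le) (Ioi_subset_Ioi hxy).eventuallyLE)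
    (by positivity)

theorem convexOn_Qfun : ConvexOn ℝ (Ici 0) Qfun := by
  have hdiff : Differentiable ℝ Qfun := fun x => (hasDerivAt_Qfun x).differentiableAt
  refine MonotoneOn.convexOn_of_deriv (convex_Ici 0) hdiff.continuous.continuousOn
    hdiff.differentiableOn ?_
  rw [interior_Ici]
  intro x hx y _ hxy
  simp only [(hasDerivAt_Qfun _).deriv, neg_le_neg_iff]
  gcongr
  exact le_of_lt hx

theorem concaveOn_sqrt_Ioi : ConcaveOn ℝ (Ioi 0) fun x : ℝ => √x :=
  strictConcaveOn_sqrt.concaveOn.subset Ioi_subset_Ici_self (convex_Ioi 0)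

theorem convexOn_inv_sqrt : ConvexOn ℝ (Ioi 0) fun x : ℝ => (√x)⁻¹ := by
  have hinv : ConvexOn ℝ (Ioi 0) fun x : ℝ => x⁻¹ := by
    simpa only [zpow_neg_one] using convexOn_zpow (𝕜 := ℝ) (-1)
  exact hinv.comp_concaveOn_of_mapsTo concaveOn_sqrt_Ioi (fun x hx => sqrt_pos.2 hx)
    fun x hx y _ hxy => inv_anti₀ hx hxy

theorem wfun_eq (d V C : ℝ) {n : ℝ} (hn : 0 < n) :
    wfun d V C n = log 2 / √V * (C * √n - d * (√n)⁻¹) := by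
  rw [wfun, sqrt_div hn.le]
  field_simp
  rw [sq_sqrt hn.le]
  ring

theorem concaveOn_wfun {d C : ℝ} (hd : 0 ≤ d) (hC : 0 ≤ C) (V : ℝ) :
    ConcaveOn ℝ (Ioi 0) (wfun d V C) := by
  have hlog : 0 ≤ log 2 / √V := by positivity
  refine ((concaveOn_sqrt_Ioi.smul hC).sub (convexOn_inv_sqrt.smul hd)).smul hlog |>.congr ?_
  intro n hn
  simp [wfun_eq d V C hn]

theorem eps_convex_general (d V C : ℝ) (hd : 0 < d) (hC : 0 < C)
    (s : Set ℝ) (hconv : Convex ℝ s) (hs : s ⊆ Set.Ioi (0 : ℝ))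
    (hw : ∀ n ∈ s, 0 ≤ wfun d V C n) :
    ConvexOn ℝ s (fun n => Qfun (wfun d V C n)) :=
  convexOn_Qfun.comp_concaveOn_of_mapsTo ((concaveOn_wfun hd.le hC.le V).subset hs hconv) hw
    (antitone_Qfun.antitoneOn _)

theorem eps_convex (d V C : ℝ) (hd : 0 < d) (hV : 0 < V) (hC : 0 < C)
    (s : Set ℝ) (hconv : Convex ℝ s) (hs : s ⊆ Set.Ioi (0 : ℝ))
    (hw : ∀ n ∈ s, 0 ≤ wfun d V C n) :
    ConvexOn ℝ s (fun n => Qfun (wfun d V C n)) :=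
  eps_convex_general d V C hd hC s hconv hs hw
end

section
/- Let f, g : D → ℝ with f ≥ 0 and g > 0. Then sup_{x ∈ D} f(x)·g(x) = sup_{x ∈ D, y ∈ ℝ} (2y√(f(x)) - y²/g(x)); in particular, a pair (x*, y*) maximizes the right-hand side if and only if x* maximizes f·g and y* = √(f(x*))·g(x*). -/
/-! For fixed `x`, the map `y ↦ 2 y √(f x) - y² / g x` is a concave parabola whose maximum
`f x · g x` is attained exactly at `y = √(f x) · g x`; completing the square,
`2 y a - y² / b = a² b - (a b - y)² / b`. Maximizing first over `y` and then over `x` therefore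
recovers `sup f · g`, and the joint maximizers are read off from the unique inner maximizer. -/

section PartialMaximization

variable {D Y α : Type*} {F : D → Y → α} {G : D → α} {φ : D → Y}

theorem ciSup_eq_of_forall_le_of_apply_eq [ConditionallyCompleteLattice α]
    (hle : ∀ x y, F x y ≤ G x) (hmax : ∀ x, F x (φ x) = G x) (x : D) :
    ⨆ y, F x y = G x :=
  have : Nonempty Y := ⟨φ x⟩
  le_antisymm (ciSup_le (hle x)) <|
    hmax x ▸ le_ciSup ⟨G x, Set.forall_mem_range.2 (hle x)⟩ (φ x)

theorem forall_le_apply_iff_of_forall_eq_iff [PartialOrder α]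
    (hle : ∀ x y, F x y ≤ G x) (heq : ∀ x y, F x y = G x ↔ y = φ x) (x' : D) (y' : Y) :
    (∀ x y, F x y ≤ F x' y') ↔ (∀ x, G x ≤ G x') ∧ y' = φ x' := by
  have hmax x : F x (φ x) = G x := (heq x _).2 rfl
  constructor
  · intro h
    have hval : F x' y' = G x' := le_antisymm (hle x' y') (hmax x' ▸ h x' (φ x'))
    exact ⟨fun x => hmax x ▸ hval ▸ h x (φ x), (heq x' y').1 hval⟩
  · rintro ⟨hG, rfl⟩ x y
    exact (hle x y).trans <| (hG x).trans (hmax x').ge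

end PartialMaximization

section QuadraticTransform

variable {a b : ℝ} (y : ℝ)

theorem two_mul_mul_sub_sq_div_eq (hb : 0 < b) :
    2 * y * a - y ^ 2 / b = a ^ 2 * b - (a * b - y) ^ 2 / b := by
  field_simp
  ring

theorem two_mul_mul_sub_sq_div_le (hb : 0 < b) : 2 * y * a - y ^ 2 / b ≤ a ^ 2 * b := by
  rw [two_mul_mul_sub_sq_div_eq y hb]
  exact sub_le_self _ (by positivity)

theorem two_mul_mul_sub_sq_div_eq_iff (hb : 0 < b) :
    2 * y * a - y ^ 2 / b = a ^ 2 * b ↔ y = a * b := by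
  rw [two_mul_mul_sub_sq_div_eq y hb, sub_eq_self, div_eq_zero_iff, or_iff_left hb.ne',
    sq_eq_zero_iff, sub_eq_zero, eq_comm]

end QuadraticTransform

theorem quadratic_transform_sup {D : Type*} (f g : D → ℝ)
    (hf : ∀ x, 0 ≤ f x) (hg : ∀ x, 0 < g x) :
    (⨆ x : D, f x * g x) =
      (⨆ x : D, ⨆ y : ℝ, (2 * y * Real.sqrt (f x) - y ^ 2 / g x)) ∧
    ∀ (x' : D) (y' : ℝ),
      (∀ (x : D) (y : ℝ),
          2 * y * Real.sqrt (f x) - y ^ 2 / g x ≤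
            2 * y' * Real.sqrt (f x') - y' ^ 2 / g x') ↔
        ((∀ x : D, f x * g x ≤ f x' * g x') ∧ y' = Real.sqrt (f x') * g x') := by
  have hsq x : Real.sqrt (f x) ^ 2 * g x = f x * g x := by rw [Real.sq_sqrt (hf x)]
  have hle x y : 2 * y * Real.sqrt (f x) - y ^ 2 / g x ≤ f x * g x :=
    hsq x ▸ two_mul_mul_sub_sq_div_le y (hg x)
  have heq x y :
      2 * y * Real.sqrt (f x) - y ^ 2 / g x = f x * g x ↔ y = Real.sqrt (f x) * g x :=
    hsq x ▸ two_mul_mul_sub_sq_div_eq_iff y (hg x)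
  refine ⟨iSup_congr fun x => ?_, forall_le_apply_iff_of_forall_eq_iff hle heq⟩
  exact (ciSup_eq_of_forall_le_of_apply_eq hle (fun x => (heq x _).2 rfl) x).symm
end
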